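/- Let 0 < h < 1 and let δ_h > 0 satisfy 1/4 + δ_h·tan(arctan(1/(2δ_h)) + δ_h·log h) − δ_h² = 0 with arctan(1/(2δ_h)) + δ_h·log h ∈ (−π/2, π/2). Define u_h : [0,1] → ℝ by u_h(x) = (x/√h)·cos(arctan(1/(2δ_h)) + δ_h·log h) for x ∈ [0,h] and u_h(x) = √x·cos(arctan(1/(2δ_h)) + δ_h·log x) for x ∈ (h,1]. Then u_h ∈ U_h, u_h is not identically zero, and ∫₀¹ u_h'(x)² dx = (1/4 + δ_h²)·∫₀¹ x⁻² u_h(x)² dx; in particular μ_h ≤ 1/4 + δ_h². -/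

import Mathlib

open MeasureTheory Real Set Filter

noncomputable section

/-- `u ∈ H¹(0,1)` with weak derivative `u'`: `u` is continuous on `[0,1]`,
`u'` is (square-)integrable on `(0,1)`, and `u(x) = u(0) + ∫₀ˣ u'`. -/
def IsH1 (u u' : ℝ → ℝ) : Prop :=
  ContinuousOn u (Set.Icc 0 1) ∧
  IntervalIntegrable u' volume 0 1 ∧
  IntegrableOn (fun t => u' t ^ 2) (Set.Ioo 0 1) ∧
  ∀ x ∈ Set.Icc (0:ℝ) 1, u x = u 0 + ∫ t in (0:ℝ)..x, u' t

/-- `u ∈ U_h` (with weak derivative `u'`): `u ∈ H¹(0,1)`, `u(0) = 0`, and `u` is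
affine on `[0,h]`, i.e. `u(x) = (x/h)·u(h)` there. -/
def MemUh (h : ℝ) (u u' : ℝ → ℝ) : Prop :=
  IsH1 u u' ∧ u 0 = 0 ∧ ∀ x ∈ Set.Icc (0:ℝ) h, u x = (x / h) * u h

/-- `μ_h`: the infimum of the Hardy Rayleigh quotient over nonzero members of `U_h`. -/
def muh (h : ℝ) : ℝ :=
  sInf { s : ℝ | ∃ u u' : ℝ → ℝ, MemUh h u u' ∧ (∃ x ∈ Set.Icc (0:ℝ) 1, u x ≠ 0) ∧
    s = (∫ x in (0:ℝ)..1, (u' x) ^ 2) / (∫ x in (0:ℝ)..1, (u x) ^ 2 / x ^ 2) }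

/-- The near-optimal function `u_h`. -/
def uh (h δ : ℝ) : ℝ → ℝ := fun x =>
  if x ≤ h then (x / Real.sqrt h) * Real.cos (Real.arctan (1 / (2 * δ)) + δ * Real.log h)
  else Real.sqrt x * Real.cos (Real.arctan (1 / (2 * δ)) + δ * Real.log x)

/-! The tail of `u_h` is `G(x) = √x cos θ(x)`, `θ(x) = arctan(1/(2δ)) + δ log x`, a solution of
the Euler equation `x² G'' + (1/4 + δ²) G = 0`. Integrating by parts on `[h, 1]`,
`∫ G'² - (1/4 + δ²) ∫ G²/x² = [G G']ₕ¹`, and `G'(1) = 0` by the choice of `arctan(1/(2δ))`.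
On `[0, h]` the function is linear with slope `a = G(h)/h`, and its contribution `h a² (3/4 - δ²)`
cancels `-G(h) G'(h)` exactly when `δ sin θ(h) = (δ² - 1/4) cos θ(h)`, which is the equation
defining `δ`. -/

section Piecewise

variable {f φ Φ : ℝ → ℝ} {h b k : ℝ}

theorem integral_of_eqOn_const (hb : 0 ≤ b) (hf : EqOn f (fun _ => k) (Ioc 0 b)) :
    ∫ x in (0:ℝ)..b, f x = b * k := by
  rw [intervalIntegral.integral_congr_ae (g := fun _ => k)
    (Eventually.of_forall fun x hx => hf (by rwa [uIoc_of_le hb] at hx))]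
  simp

theorem intervalIntegrable_of_eqOn_const (hb : 0 ≤ b) (hf : EqOn f (fun _ => k) (Ioc 0 b)) :
    IntervalIntegrable f volume 0 b :=
  intervalIntegrable_const.congr (by rw [uIoc_of_le hb]; exact hf.symm)

theorem intervalIntegrable_of_eqOn_const_of_eqOn (hh : 0 ≤ h) (hhb : h ≤ b)
    (hk : EqOn f (fun _ => k) (Ioc 0 h)) (hφ : EqOn f φ (Ioc h b))
    (hφi : IntervalIntegrable φ volume h b) : IntervalIntegrable f volume 0 b :=
  (intervalIntegrable_of_eqOn_const hh hk).trans
    (hφi.congr (by rw [uIoc_of_le hhb]; exact hφ.symm))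

theorem integral_of_eqOn_const_of_hasDerivAt (hh : 0 ≤ h) (hhb : h ≤ b)
    (hk : EqOn f (fun _ => k) (Ioc 0 h)) (hφ : EqOn f φ (Ioc h b))
    (hφi : IntervalIntegrable φ volume h b) (hΦ : ∀ x ∈ Icc h b, HasDerivAt Φ (φ x) x) :
    ∫ x in (0:ℝ)..b, f x = h * k + (Φ b - Φ h) := by
  have hφf : EqOn φ f (uIoc h b) := by rw [uIoc_of_le hhb]; exact hφ.symm
  rw [← intervalIntegral.integral_add_adjacent_intervals
      (intervalIntegrable_of_eqOn_const hh hk) (hφi.congr hφf),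
    integral_of_eqOn_const hh hk,
    ← intervalIntegral.integral_congr_ae (Eventually.of_forall fun x hx => hφf hx),
    intervalIntegral.integral_eq_sub_of_hasDerivAt (by rwa [uIcc_of_le hhb]) hφi]

end Piecewise

theorem memUh_of_piecewise {h a : ℝ} {u u' G g : ℝ → ℝ} (hh0 : 0 < h) (hh1 : h ≤ 1)
    (hu_le : ∀ x ∈ Icc 0 h, u x = a * x) (hu_gt : EqOn u G (Ioc h 1))
    (hu'_le : EqOn u' (fun _ => a) (Ioc 0 h)) (hu'_gt : EqOn u' g (Ioc h 1))
    (hG : ∀ x ∈ Icc h 1, HasDerivAt G (g x) x) (hg : ContinuousOn g (Icc h 1))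
    (hGh : G h = a * h) : MemUh h u u' := by
  have hu0 : u 0 = 0 := by rw [hu_le 0 ⟨le_rfl, hh0.le⟩, mul_zero]
  have hprim : ∀ x ∈ Icc (0:ℝ) 1, u x = ∫ t in (0:ℝ)..x, u' t := by
    rintro x ⟨hx0, hx1⟩
    rcases le_or_gt x h with hxh | hxh
    · rw [hu_le x ⟨hx0, hxh⟩, integral_of_eqOn_const hx0 (hu'_le.mono (Ioc_subset_Ioc_right hxh)),
        mul_comm]
    · rw [hu_gt ⟨hxh, hx1⟩, integral_of_eqOn_const_of_hasDerivAt hh0.le hxh.le hu'_le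
        (hu'_gt.mono (Ioc_subset_Ioc_right hx1))
        ((hg.mono (Icc_subset_Icc_right hx1)).intervalIntegrable_of_Icc hxh.le)
        (fun t ht => hG t ⟨ht.1, ht.2.trans hx1⟩), hGh]
      ring
  have hu'i : IntervalIntegrable u' volume 0 1 :=
    intervalIntegrable_of_eqOn_const_of_eqOn hh0.le hh1 hu'_le hu'_gt
      (hg.intervalIntegrable_of_Icc hh1)
  have hu'sq : IntervalIntegrable (fun t => u' t ^ 2) volume 0 1 :=
    intervalIntegrable_of_eqOn_const_of_eqOn (k := a ^ 2) (φ := fun t => g t ^ 2) hh0.le hh1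
      (fun t ht => by simp only [hu'_le ht]) (fun t ht => by simp only [hu'_gt ht])
      ((hg.pow 2).intervalIntegrable_of_Icc hh1)
  have hcont : ContinuousOn u (Icc 0 1) := by
    have hC := intervalIntegral.continuousOn_primitive_interval (μ := volume) (f := u') <| by
      rw [uIcc_of_le zero_le_one]
      exact (intervalIntegrable_iff_integrableOn_Icc_of_le zero_le_one).1 hu'i
    rw [uIcc_of_le zero_le_one] at hC
    exact hC.congr hprim
  refine ⟨⟨hcont, hu'i, ?_, fun x hx => by rw [hu0, zero_add, hprim x hx]⟩, hu0, ?_⟩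
  · exact ((intervalIntegrable_iff_integrableOn_Ioc_of_le zero_le_one).1 hu'sq).mono_set
      Ioo_subset_Ioc_self
  · intro x hx
    rw [hu_le x hx, hu_le h ⟨hh0.le, le_rfl⟩]
    field_simp

theorem muh_le_of_integral_eq {h l : ℝ} {u u' : ℝ → ℝ} (hu : MemUh h u u')
    (hne : ∃ x ∈ Icc (0:ℝ) 1, u x ≠ 0) (hpos : (∫ x in (0:ℝ)..1, u x ^ 2 / x ^ 2) ≠ 0)
    (heq : ∫ x in (0:ℝ)..1, u' x ^ 2 = l * ∫ x in (0:ℝ)..1, u x ^ 2 / x ^ 2) :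
    muh h ≤ l := by
  refine csInf_le ⟨0, ?_⟩ ⟨u, u', hu, hne, by rw [heq, mul_div_cancel_right₀ _ hpos]⟩
  rintro s ⟨v, v', -, -, rfl⟩
  exact div_nonneg (intervalIntegral.integral_nonneg zero_le_one fun t _ => sq_nonneg _)
    (intervalIntegral.integral_nonneg zero_le_one fun t _ => by positivity)

section Profile

variable (δ : ℝ) {x : ℝ}

def phase (x : ℝ) : ℝ := arctan (1 / (2 * δ)) + δ * log x

def profile (x : ℝ) : ℝ := √x * cos (phase δ x)

def profileDeriv (x : ℝ) : ℝ := (cos (phase δ x) / 2 - δ * sin (phase δ x)) / √x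

/-- `profile * profileDeriv` on `(0, ∞)`: the boundary term of the integration by parts. -/
def boundaryTerm (x : ℝ) : ℝ := cos (phase δ x) * (cos (phase δ x) / 2 - δ * sin (phase δ x))

theorem hasDerivAt_phase (hx : x ≠ 0) : HasDerivAt (phase δ) (δ / x) x := by
  rw [div_eq_mul_inv]
  exact ((hasDerivAt_log hx).const_mul δ).const_add _

theorem hasDerivAt_profile (hx : 0 < x) : HasDerivAt (profile δ) (profileDeriv δ x) x := by
  refine ((hasDerivAt_sqrt hx.ne').mul ((hasDerivAt_phase δ hx.ne').cos)).congr_deriv ?_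
  unfold profileDeriv
  field_simp
  rw [sq_sqrt hx.le]
  ring

theorem continuousOn_profileDeriv : ContinuousOn (profileDeriv δ) (Ioi 0) := by
  unfold profileDeriv phase
  fun_prop (disch := intro x hx; simp_all [ne_of_gt])

theorem continuousOn_profile_sq_div_sq :
    ContinuousOn (fun x => profile δ x ^ 2 / x ^ 2) (Ioi 0) := by
  unfold profile phase
  fun_prop (disch := intro x hx; simp_all [ne_of_gt])

theorem hasDerivAt_boundaryTerm (hx : 0 < x) :
    HasDerivAt (boundaryTerm δ)
      (profileDeriv δ x ^ 2 - (1/4 + δ ^ 2) * (profile δ x ^ 2 / x ^ 2)) x := by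
  have hθ := hasDerivAt_phase δ hx.ne'
  refine (hθ.cos.mul ((hθ.cos.div_const 2).sub (hθ.sin.const_mul δ))).congr_deriv ?_
  unfold profileDeriv profile
  rw [div_pow, mul_pow, sq_sqrt hx.le]
  simp only [Pi.sub_apply]
  field_simp
  ring

theorem boundaryTerm_one (hδ : δ ≠ 0) : boundaryTerm δ 1 = 0 := by
  simp only [boundaryTerm, phase, log_one, mul_zero, add_zero, sin_arctan, cos_arctan]
  field_simp
  ring

end Profile

section Uh

variable {h δ x : ℝ}

def uhDeriv (h δ x : ℝ) : ℝ := if x ≤ h then cos (phase δ h) / √h else profileDeriv δ x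

theorem uh_of_le (hx : x ≤ h) : uh h δ x = cos (phase δ h) / √h * x := by
  rw [uh, if_pos hx, phase]
  ring

theorem uh_of_lt (hx : h < x) : uh h δ x = profile δ x := if_neg (not_le.2 hx)

theorem uh_sq_div_sq_of_mem_Ioc (hx : x ∈ Ioc 0 h) :
    uh h δ x ^ 2 / x ^ 2 = (cos (phase δ h) / √h) ^ 2 := by
  rw [uh_of_le hx.2, mul_pow, mul_div_cancel_right₀ _ (pow_ne_zero 2 hx.1.ne')]

theorem memUh_uh (hh0 : 0 < h) (hh1 : h ≤ 1) : MemUh h (uh h δ) (uhDeriv h δ) :=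
  memUh_of_piecewise hh0 hh1 (fun _ hx => uh_of_le hx.2) (fun _ hx => uh_of_lt hx.1)
    (fun _ hx => if_pos hx.2) (fun _ hx => if_neg (not_le.2 hx.1))
    (fun _ hx => hasDerivAt_profile δ (hh0.trans_le hx.1))
    ((continuousOn_profileDeriv δ).mono fun _ hx => hh0.trans_le hx.1)
    (by rw [profile, div_mul_eq_mul_div, mul_div_assoc, div_sqrt, mul_comm])

theorem intervalIntegrable_uh_sq_div_sq (hh0 : 0 < h) (hh1 : h ≤ 1) :
    IntervalIntegrable (fun x => uh h δ x ^ 2 / x ^ 2) volume 0 1 :=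
  intervalIntegrable_of_eqOn_const_of_eqOn hh0.le hh1 (fun _ hx => uh_sq_div_sq_of_mem_Ioc hx)
    (fun _ hx => by simp only [uh_of_lt hx.1])
    (((continuousOn_profile_sq_div_sq δ).mono fun _ hx => hh0.trans_le hx.1).intervalIntegrable_of_Icc
      hh1)

theorem integral_uh_sq_div_sq_pos (hh0 : 0 < h) (hh1 : h ≤ 1) (hc : cos (phase δ h) ≠ 0) :
    0 < ∫ x in (0:ℝ)..1, uh h δ x ^ 2 / x ^ 2 := by
  have hi := intervalIntegrable_uh_sq_div_sq (δ := δ) hh0 hh1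
  have htail : 0 ≤ ∫ x in h..1, uh h δ x ^ 2 / x ^ 2 :=
    intervalIntegral.integral_nonneg hh1 fun x _ => by positivity
  have hmem : h ∈ uIcc (0:ℝ) 1 := by rw [uIcc_of_le zero_le_one]; exact ⟨hh0.le, hh1⟩
  rw [← intervalIntegral.integral_add_adjacent_intervals
      (hi.mono_set (uIcc_subset_uIcc_left hmem)) (hi.mono_set (uIcc_subset_uIcc_right hmem)),
    integral_of_eqOn_const hh0.le (fun _ hx => uh_sq_div_sq_of_mem_Ioc hx)]
  positivity

theorem integral_uhDeriv_sq (hh0 : 0 < h) (hh1 : h ≤ 1) (hδ : δ ≠ 0)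
    (hsc : δ * sin (phase δ h) = (δ ^ 2 - 1/4) * cos (phase δ h)) :
    ∫ x in (0:ℝ)..1, uhDeriv h δ x ^ 2 =
      (1/4 + δ ^ 2) * ∫ x in (0:ℝ)..1, uh h δ x ^ 2 / x ^ 2 := by
  have htail : Icc h 1 ⊆ Ioi 0 := fun _ hx => hh0.trans_le hx.1
  have hderiv : IntervalIntegrable (fun x => uhDeriv h δ x ^ 2) volume 0 1 :=
    intervalIntegrable_of_eqOn_const_of_eqOn (φ := fun x => profileDeriv δ x ^ 2) hh0.le hh1
      (fun _ hx => show _ = (cos (phase δ h) / √h) ^ 2 by simp only [uhDeriv, if_pos hx.2])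
      (fun _ hx => by simp only [uhDeriv, if_neg (not_le.2 hx.1)])
      ((((continuousOn_profileDeriv δ).pow 2).mono htail).intervalIntegrable_of_Icc hh1)
  have hdefect :
      ∫ x in (0:ℝ)..1, (uhDeriv h δ x ^ 2 - (1/4 + δ ^ 2) * (uh h δ x ^ 2 / x ^ 2)) = 0 := by
    rw [integral_of_eqOn_const_of_hasDerivAt
      (φ := fun x => profileDeriv δ x ^ 2 - (1/4 + δ ^ 2) * (profile δ x ^ 2 / x ^ 2)) hh0.le hh1
      (fun _ hx => by rw [uh_sq_div_sq_of_mem_Ioc hx, uhDeriv, if_pos hx.2])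
      (fun _ hx => by simp only [uhDeriv, if_neg (not_le.2 hx.1), uh_of_lt hx.1])
      (((((continuousOn_profileDeriv δ).pow 2).sub
        (continuousOn_const.mul (continuousOn_profile_sq_div_sq δ))).mono htail).intervalIntegrable_of_Icc
          hh1)
      (fun _ hx => hasDerivAt_boundaryTerm δ (htail hx)),
      boundaryTerm_one δ hδ, boundaryTerm, mul_sub _ (_ / 2), hsc]
    field_simp
    rw [sq_sqrt hh0.le]
    ring
  rwa [intervalIntegral.integral_sub hderiv
      ((intervalIntegrable_uh_sq_div_sq hh0 hh1).const_mul _),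
    intervalIntegral.integral_const_mul, sub_eq_zero] at hdefect

end Uh

theorem uh_optimal (h δ : ℝ) (hh0 : 0 < h) (hh1 : h < 1) (hδ : 0 < δ)
    (hang : Real.arctan (1 / (2 * δ)) + δ * Real.log h ∈ Set.Ioo (-(π/2)) (π/2))
    (heq : 1/4 + δ * Real.tan (Real.arctan (1 / (2 * δ)) + δ * Real.log h) - δ ^ 2 = 0) :
    (∃ u' : ℝ → ℝ, MemUh h (uh h δ) u' ∧
      (∫ x in (0:ℝ)..1, (u' x) ^ 2)
        = (1/4 + δ ^ 2) * ∫ x in (0:ℝ)..1, (uh h δ x) ^ 2 / x ^ 2) ∧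
    (∃ x ∈ Set.Icc (0:ℝ) 1, uh h δ x ≠ 0) ∧
    muh h ≤ 1/4 + δ ^ 2 := by
  change phase δ h ∈ _ at hang
  change _ + δ * tan (phase δ h) - _ = 0 at heq
  have hc : 0 < cos (phase δ h) := cos_pos_of_mem_Ioo hang
  have hsc : δ * sin (phase δ h) = (δ ^ 2 - 1/4) * cos (phase δ h) := by
    rw [tan_eq_sin_div_cos, mul_div_assoc'] at heq
    field_simp at heq
    linarith
  have hne : ∃ x ∈ Icc (0:ℝ) 1, uh h δ x ≠ 0 :=
    ⟨h, ⟨hh0.le, hh1.le⟩, by rw [uh_of_le le_rfl]; have := sqrt_pos.2 hh0; positivity⟩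
  have hmem := memUh_uh (δ := δ) hh0 hh1.le
  have hint := integral_uhDeriv_sq hh0 hh1.le hδ.ne' hsc
  exact ⟨⟨_, hmem, hint⟩, hne,
    muh_le_of_integral_eq hmem hne (integral_uh_sq_div_sq_pos hh0 hh1.le hc.ne').ne' hint⟩
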